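/- Let (X,d,μ) be a metric space with ternary operator satisfying (M1), (M2), a control function ρ with d(μ(a,b,c),μ(a',b,c)) ≤ ρ(d(a,a')), and the coarse five point condition with constant κ5. Then there exist constants D_n (D_1 = 0, D_n = ρ(D_{n-1}) + 2ρ(κ5) + 2κ5) such that for all a,b,c,e1,...,en ∈ X: d(μ(a,b,μ(e1,...,en;c)), μ(μ(a,b,e1),...,μ(a,b,en); μ(a,b,c))) ≤ D_n. -/
import Mathlib


/-- Iterated coarse median: `iterMed μ b x₁ [x₂,…,x_k] = μ(x₁,…,x_k; b)`. -/
def iterMed {X : Type*} (μ : X → X → X → X) (b : X) (x : X) (l : List X) : X :=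
  l.foldl (fun acc y => μ acc y b) x

/-- `Dn ρ κ5 k` is the constant `D_{k+1}` of the paper: `D₁ = 0`,
`D_n = ρ(D_{n-1}) + 2ρ(κ₅) + 2κ₅`. -/
def Dn (ρ : ℝ → ℝ) (κ5 : ℝ) : ℕ → ℝ
  | 0 => 0
  | (k + 1) => ρ (Dn ρ κ5 k) + 2 * ρ κ5 + 2 * κ5

section Aux

variable {X : Type*} [MetricSpace X] (μ : X → X → X → X)
    (ρ : ℝ → ℝ) (κ5 : ℝ)

/-- Key one-step lemma: the distance from `μ(a,b,μ(M,x,c))` to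
`μ(N, μ(a,b,x), μ(a,b,c))` is at most `ρ(d(μ(a,b,M),N)) + 2ρ(κ₅) + 2κ₅`. -/
theorem keyStep (hρ : Monotone ρ)
    (M1 : ∀ a b, μ a a b = a)
    (M2a : ∀ a b c, μ a b c = μ b a c)
    (M2b : ∀ a b c, μ a b c = μ a c b)
    (C1 : ∀ a a' b c : X, dist (μ a b c) (μ a' b c) ≤ ρ (dist a a'))
    (five : ∀ x y z v w : X,
      dist (μ x y (μ z v w)) (μ (μ x y z) (μ x y v) w) ≤ κ5)
    (a b c x M N : X) :
    dist (μ a b (μ M x c)) (μ N (μ a b x) (μ a b c)) ≤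
      ρ (dist (μ a b M) N) + 2 * ρ κ5 + 2 * κ5 := by
  have habA : ∀ a b : X, μ a b a = a := by
    intro a b; rw [M2b]; exact M1 a b
  have habB : ∀ a b : X, μ a b b = b := by
    intro a b; rw [M2a, M2b]; exact M1 b a
  -- idempotence: d(μ a b (μ a b w), μ a b w) ≤ κ5
  have idem : ∀ a b w : X, dist (μ a b (μ a b w)) (μ a b w) ≤ κ5 := by
    intro a b w
    have h := five a b a b w
    rwa [habA a b, habB a b] at h
  -- C1 variants for second and third arguments
  have C1b : ∀ (b b' a c : X), dist (μ a b c) (μ a b' c) ≤ ρ (dist b b') := by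
    intro b b' a c
    rw [M2a a b c, M2a a b' c]; exact C1 b b' a c
  have C1c : ∀ (c c' a b : X), dist (μ a b c) (μ a b c') ≤ ρ (dist c c') := by
    intro c c' a b
    rw [M2b a b c, M2a a c b, M2b a b c', M2a a c' b]; exact C1 c c' a b
  set T0 := μ a b (μ M x c) with hT0
  set T1 := μ a b (μ a b (μ M x c)) with hT1
  set T2 := μ a b (μ M (μ a b c) (μ a b x)) with hT2
  set T3 := μ (μ a b M) (μ a b (μ a b c)) (μ a b x) with hT3
  set T4 := μ N (μ a b (μ a b c)) (μ a b x) with hT4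
  set T5 := μ N (μ a b x) (μ a b c) with hT5
  have d01 : dist T0 T1 ≤ κ5 := by
    rw [dist_comm]; exact idem a b (μ M x c)
  have d12 : dist T1 T2 ≤ ρ κ5 := by
    have inner : dist (μ a b (μ M x c)) (μ M (μ a b c) (μ a b x)) ≤ κ5 := by
      have h := five a b c x M
      -- μ c x M = μ M x c and μ (μ a b c) (μ a b x) M = μ M (μ a b c) (μ a b x)
      have e1 : μ c x M = μ M x c := by
        rw [M2a c x M, M2b x c M, M2a x M c]
      have e2 : μ (μ a b c) (μ a b x) M
          = μ M (μ a b c) (μ a b x) := by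
        rw [M2b (μ a b c) (μ a b x) M, M2a (μ a b c) M (μ a b x)]
      rwa [e1, e2] at h
    calc dist T1 T2 ≤ ρ (dist (μ a b (μ M x c)) (μ M (μ a b c) (μ a b x))) :=
          C1c _ _ a b
      _ ≤ ρ κ5 := hρ inner
  have d23 : dist T2 T3 ≤ κ5 := five a b M (μ a b c) (μ a b x)
  have d34 : dist T3 T4 ≤ ρ (dist (μ a b M) N) :=
    C1 (μ a b M) N (μ a b (μ a b c)) (μ a b x)
  have d45 : dist T4 T5 ≤ ρ κ5 := by
    have : T5 = μ N (μ a b c) (μ a b x) := M2b N (μ a b x) (μ a b c)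
    rw [this]
    calc dist T4 (μ N (μ a b c) (μ a b x))
        ≤ ρ (dist (μ a b (μ a b c)) (μ a b c)) := C1b _ _ N (μ a b x)
      _ ≤ ρ κ5 := hρ (idem a b c)
  have tri1 : dist T0 T3 ≤ dist T0 T1 + dist T1 T2 + dist T2 T3 :=
    dist_triangle4 T0 T1 T2 T3
  have tri2 : dist T0 T5 ≤ dist T0 T3 + dist T3 T4 + dist T4 T5 :=
    dist_triangle4 T0 T3 T4 T5
  linarith

end Aux

/-- `d(μ(a,b,μ(e₁,…,e_n;c)), μ(μ(a,b,e₁),…,μ(a,b,e_n); μ(a,b,c))) ≤ D_n`.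
The points `e₁,…,e_n` are given as a head `e1` with tail list `l`, so
`n = l.length + 1`. -/
theorem stmt8 {X : Type*} [MetricSpace X] (μ : X → X → X → X)
    (ρ : ℝ → ℝ) (κ5 : ℝ) (hρ : Monotone ρ)
    (M1 : ∀ a b, μ a a b = a)
    (M2a : ∀ a b c, μ a b c = μ b a c)
    (M2b : ∀ a b c, μ a b c = μ a c b)
    (C1 : ∀ a a' b c : X, dist (μ a b c) (μ a' b c) ≤ ρ (dist a a'))
    (five : ∀ x y z v w : X,
      dist (μ x y (μ z v w)) (μ (μ x y z) (μ x y v) w) ≤ κ5) :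
    ∀ (a b c e1 : X) (l : List X),
      dist (μ a b (iterMed μ c e1 l))
        (iterMed μ (μ a b c) (μ a b e1) (l.map fun x => μ a b x)) ≤
      Dn ρ κ5 l.length := by
  intro a b c e1 l
  induction l using List.reverseRecOn with
  | nil =>
      simp [iterMed, Dn]
  | append_singleton l x ih =>
      have hL : iterMed μ c e1 (l ++ [x]) = μ (iterMed μ c e1 l) x c := by
        simp [iterMed, List.foldl_append]
      have hR : iterMed μ (μ a b c) (μ a b e1) ((l ++ [x]).map fun t => μ a b t)
          = μ (iterMed μ (μ a b c) (μ a b e1) (l.map fun t => μ a b t))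
              (μ a b x) (μ a b c) := by
        simp [iterMed, List.foldl_append]
      rw [hL, hR]
      have key := keyStep μ ρ κ5 hρ M1 M2a M2b C1 five a b c x
        (iterMed μ c e1 l) (iterMed μ (μ a b c) (μ a b e1) (l.map fun t => μ a b t))
      have hlen : (l ++ [x]).length = l.length + 1 := by simp
      rw [hlen]
      have hmono : ρ (dist (μ a b (iterMed μ c e1 l))
          (iterMed μ (μ a b c) (μ a b e1) (l.map fun t => μ a b t)))
          ≤ ρ (Dn ρ κ5 l.length) := hρ ih
      show _ ≤ ρ (Dn ρ κ5 l.length) + 2 * ρ κ5 + 2 * κ5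
      linarith
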